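/- Let I ⊆ ℝ∖{0} be an open interval and let p, q : I → ℂ be differentiable functions satisfying Hamilton's equations for the Painlevé V Hamiltonian defined by s·H_V = p²q(q−1)² − s·pq, namely s·q′(s) = 2p(s)q(s)(q(s)−1)² − s·q(s) and s·p′(s) = −p(s)²(q(s)−1)(3q(s)−1) + s·p(s) for all s ∈ I. Then σ(s) := p(s)²q(s)(q(s)−1)² − s·p(s)q(s) is twice differentiable on I and satisfies the Jimbo–Miwa–Okamoto σ-form of the Painlevé V equation: (s·σ″(s))² − (σ(s) − s·σ′(s) + 4(σ′(s))²)·(σ(s) − s·σ′(s)) = 0 for all s ∈ I. -/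

import Mathlib

open Complex

/-- `σ(s) = p(s)²q(s)(q(s)−1)² − s·p(s)q(s)`, i.e. `s·H_V` for the Painlevé V
Hamiltonian `s·H_V = p²q(q−1)² − s·pq`. -/
noncomputable def sigmaPV (p q : ℝ → ℂ) (s : ℝ) : ℂ :=
  (p s) ^ 2 * q s * (q s - 1) ^ 2 - (s : ℂ) * p s * q s

/-!
Along a solution of Hamilton's equations the Hamiltonian changes only through its explicit
dependence on `s`, which gives `σ' = -p q`, hence `s σ'' = -q (s p') - p (s q') = p² q (q² - 1)`.
With `σ - s σ' = p² q (q - 1)²` and `σ - s σ' + 4 σ'² = p² q (q + 1)²` the σ-form reduces to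
the identity `(p² q (q² - 1))² = p² q (q + 1)² · p² q (q - 1)²`.
-/

theorem sigmaForm_of_hamilton {R : Type*} [CommRing R] {s p q p' q' : R}
    (hq : s * q' = 2 * p * q * (q - 1) ^ 2 - s * q)
    (hp : s * p' = -p ^ 2 * (q - 1) * (3 * q - 1) + s * p) :
    (s * -(p' * q + p * q')) ^ 2
      - (p ^ 2 * q * (q - 1) ^ 2 - s * p * q - s * -(p * q) + 4 * (-(p * q)) ^ 2)
        * (p ^ 2 * q * (q - 1) ^ 2 - s * p * q - s * -(p * q)) = 0 := by
  have hsσ'' : s * -(p' * q + p * q') = p ^ 2 * q * (q ^ 2 - 1) := by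
    linear_combination (-q) * hp - p * hq
  rw [hsσ'']
  ring

theorem hasDerivAt_sigmaPV {p q : ℝ → ℂ} {p' q' : ℂ} {s : ℝ} (hs : s ≠ 0)
    (hpd : HasDerivAt p p' s) (hqd : HasDerivAt q q' s)
    (hq : (s : ℂ) * q' = 2 * p s * q s * (q s - 1) ^ 2 - s * q s)
    (hp : (s : ℂ) * p' = -(p s) ^ 2 * (q s - 1) * (3 * q s - 1) + s * p s) :
    HasDerivAt (sigmaPV p q) (-(p s * q s)) s := by
  have hσ : HasDerivAt (sigmaPV p q)
      ((2 * p s * p') * q s * (q s - 1) ^ 2 + p s ^ 2 * q' * (q s - 1) ^ 2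
        + p s ^ 2 * q s * (2 * (q s - 1) * q') - (s * p' * q s + p s * q s + s * p s * q')) s := by
    have hid : HasDerivAt (fun t : ℝ => (t : ℂ)) 1 s := (hasDerivAt_id s).ofReal_comp
    refine ((((hpd.pow 2).mul hqd).mul ((hqd.sub_const 1).pow 2)).sub
      ((hid.mul hpd).mul hqd)).congr_deriv ?_
    simp only [Pi.pow_apply, Pi.mul_apply]
    push_cast
    ring
  refine hσ.congr_deriv (mul_left_cancel₀ (ofReal_ne_zero.2 hs) ?_)
  linear_combination (2 * p s * q s * (q s - 1) ^ 2 - s * q s) * hp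
    + (p s ^ 2 * (q s - 1) ^ 2 + 2 * p s ^ 2 * q s * (q s - 1) - s * p s) * hq

theorem sigma_form_of_painleveV_hamiltonian
    (I : Set ℝ) (hIopen : IsOpen I) (hI0 : (0 : ℝ) ∉ I)
    (p q : ℝ → ℂ)
    (hdiff : ∀ s ∈ I, DifferentiableAt ℝ p s ∧ DifferentiableAt ℝ q s)
    (hq : ∀ s ∈ I, (s : ℂ) * deriv q s
        = 2 * p s * q s * (q s - 1) ^ 2 - (s : ℂ) * q s)
    (hp : ∀ s ∈ I, (s : ℂ) * deriv p s
        = -(p s) ^ 2 * (q s - 1) * (3 * q s - 1) + (s : ℂ) * p s) :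
    ∀ s ∈ I,
      DifferentiableAt ℝ (sigmaPV p q) s ∧
      DifferentiableAt ℝ (deriv (sigmaPV p q)) s ∧
      ((s : ℂ) * deriv (deriv (sigmaPV p q)) s) ^ 2
        - (sigmaPV p q s - (s : ℂ) * deriv (sigmaPV p q) s
            + 4 * (deriv (sigmaPV p q) s) ^ 2)
          * (sigmaPV p q s - (s : ℂ) * deriv (sigmaPV p q) s) = 0 := by
  have hσ' : ∀ s ∈ I, HasDerivAt (sigmaPV p q) (-(p s * q s)) s := fun s hs =>
    hasDerivAt_sigmaPV (ne_of_mem_of_not_mem hs hI0) (hdiff s hs).1.hasDerivAt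
      (hdiff s hs).2.hasDerivAt (hq s hs) (hp s hs)
  intro s hs
  have hderiv : deriv (sigmaPV p q) =ᶠ[nhds s] fun t => -(p t * q t) := by
    filter_upwards [hIopen.mem_nhds hs] with t ht
    exact (hσ' t ht).deriv
  have hσ'' : HasDerivAt (deriv (sigmaPV p q)) (-(deriv p s * q s + p s * deriv q s)) s :=
    ((hdiff s hs).1.hasDerivAt.mul (hdiff s hs).2.hasDerivAt).neg.congr_of_eventuallyEq hderiv
  refine ⟨(hσ' s hs).differentiableAt, hσ''.differentiableAt, ?_⟩
  rw [hσ''.deriv, hderiv.eq_of_nhds, sigmaPV]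
  exact sigmaForm_of_hamilton (hq s hs) (hp s hs)
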